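/- Let A(t) be an n×l real matrix function of class C¹ on [a,b] with l ≤ n, and set B(t) = A(t)ᵀA(t). Suppose det B(t) ≠ 0 for t ∈ (a,b), det B(a) = det B(b) = 0, and there exist h_a > 0, h_b > 0 with det B(a+t) = h_a² t² + o(t²) as t → 0+ and det B(b+t) = h_b² t² + o(t²) as t → 0−. Fix α > 0, γ > 0, κ > 0. Then there exists λ > 0, depending only on A, α, γ and κ, such that for every continuous ℝˡ-valued function r on [a,b] satisfying ‖r‖_{i,a,b} ≥ α‖r‖_{a,b}, |A(t)r(t)| ≤ κ(t−a)‖r‖_{a,b} for t ∈ [a, a+γ), and |A(t)r(t)| ≤ κ(b−t)‖r‖_{a,b} for t ∈ (b−γ, b], one has ‖Ar‖_{i,a,b} ≥ λ‖r‖_{i,a,b}. -/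

import Mathlib

/-!
Away from the endpoints the Gram determinant `det (Aᵀ A)` does not vanish, so on the compact set
`[a + δ, b - δ] × (unit sphere)` the continuous function `(t, v) ↦ |A(t) v|` has a positive
minimum `m`, giving `|A(t) v| ≥ m |v|` there. Choosing `4δ ≤ α`, the hypothesis
`‖r‖_{i,a,b} ≥ α ‖r‖_{a,b}` forces the two end strips, of total mass at most `2δ ‖r‖_{a,b}`,
to carry at most half of `‖r‖_{i,a,b}`, so `λ = m / 2` works.
-/

open Set Filter Asymptotics Topology MeasureTheory Matrix

/-- Euclidean norm of a vector in `ℝˡ`. -/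
noncomputable def euclNorm {l : ℕ} (v : Fin l → ℝ) : ℝ := Real.sqrt (∑ i, v i ^ 2)

/-- `‖q‖_{a,b} = max_{t ∈ [a,b]} |q(t)|`. -/
noncomputable def supNorm {l : ℕ} (a b : ℝ) (q : ℝ → Fin l → ℝ) : ℝ :=
  sSup ((fun t => euclNorm (q t)) '' Set.Icc a b)

/-- `‖q‖_{i,a,b} = ∫_a^b |q(t)| dt`. -/
noncomputable def intNorm {l : ℕ} (a b : ℝ) (q : ℝ → Fin l → ℝ) : ℝ :=
  ∫ t in a..b, euclNorm (q t)

theorem IsCompact.exists_pos_mul_norm_le_of_injective {X E F : Type*} [TopologicalSpace X]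
    [NormedAddCommGroup E] [NormedSpace ℝ E] [FiniteDimensional ℝ E]
    [NormedAddCommGroup F] [NormedSpace ℝ F] {K : Set X} (hK : IsCompact K)
    {f : X → E →L[ℝ] F} (hf : ContinuousOn f K) (hinj : ∀ x ∈ K, Function.Injective (f x)) :
    ∃ m > 0, ∀ x ∈ K, ∀ v, m * ‖v‖ ≤ ‖f x v‖ := by
  have hcont : ContinuousOn (fun p : X × E => ‖f p.1 p.2‖) (K ×ˢ Metric.sphere 0 1) :=
    ((hf.comp continuousOn_fst fun _ hp => hp.1).clm_apply continuousOn_snd).norm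
  have hpos : ∀ p ∈ K ×ˢ Metric.sphere (0 : E) 1, 0 < ‖f p.1 p.2‖ := by
    rintro ⟨x, v⟩ ⟨hx, hv⟩
    refine norm_pos_iff.2 fun h => ?_
    have : v = 0 := hinj x hx (by rwa [map_zero])
    simp [this] at hv
  obtain ⟨m, hm, hmin⟩ := (hK.prod (isCompact_sphere 0 1)).exists_forall_le' hcont hpos
  refine ⟨m, hm, fun x hx v => ?_⟩
  rcases eq_or_ne v 0 with rfl | hv
  · simp
  have hunit : ‖v‖⁻¹ • v ∈ Metric.sphere (0 : E) 1 := by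
    simp [norm_smul, norm_ne_zero_iff.2 hv]
  calc m * ‖v‖ ≤ ‖f x (‖v‖⁻¹ • v)‖ * ‖v‖ := by gcongr; exact hmin (x, _) ⟨hx, hunit⟩
    _ = ‖f x v‖ := by
      rw [map_smul, norm_smul, norm_inv, norm_norm, mul_comm ‖v‖⁻¹,
        inv_mul_cancel_right₀ (norm_ne_zero_iff.2 hv)]

theorem euclNorm_eq_norm {l : ℕ} (v : Fin l → ℝ) :
    euclNorm v = ‖(WithLp.toLp 2 v : EuclideanSpace ℝ (Fin l))‖ := by
  simp [euclNorm, EuclideanSpace.norm_eq]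

theorem euclNorm_nonneg {l : ℕ} (v : Fin l → ℝ) : 0 ≤ euclNorm v := Real.sqrt_nonneg _

theorem continuous_euclNorm {l : ℕ} : Continuous (euclNorm (l := l)) := by
  simp_rw [funext euclNorm_eq_norm]
  exact continuous_norm.comp (PiLp.continuous_toLp 2 _)

theorem IsCompact.exists_pos_mul_euclNorm_le {X : Type*} [TopologicalSpace X] {n l : ℕ}
    {K : Set X} (hK : IsCompact K) {A : X → Matrix (Fin n) (Fin l) ℝ} (hA : ContinuousOn A K)
    (hdet : ∀ x ∈ K, ((A x)ᵀ * A x).det ≠ 0) :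
    ∃ m > 0, ∀ x ∈ K, ∀ v, m * euclNorm v ≤ euclNorm (A x *ᵥ v) := by
  let L : Matrix (Fin n) (Fin l) ℝ →ₗ[ℝ]
      EuclideanSpace ℝ (Fin l) →L[ℝ] EuclideanSpace ℝ (Fin n) :=
    LinearMap.toContinuousLinearMap.toLinearMap ∘ₗ toEuclideanLin.toLinearMap
  obtain ⟨m, hm, hbound⟩ := hK.exists_pos_mul_norm_le_of_injective
    (L.continuous_of_finiteDimensional.comp_continuousOn hA) fun x hx => by
      refine (injective_iff_map_eq_zero _).2 fun v hv => WithLp.ofLp_injective 2 ?_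
      refine eq_zero_of_mulVec_eq_zero (hdet x hx) ?_
      rw [← mulVec_mulVec, show A x *ᵥ WithLp.ofLp v = 0 from congrArg WithLp.ofLp hv,
        mulVec_zero]
  refine ⟨m, hm, fun x hx v => ?_⟩
  rw [euclNorm_eq_norm, euclNorm_eq_norm]
  exact hbound x hx (WithLp.toLp 2 v)

theorem le_supNorm {l : ℕ} {a b : ℝ} {q : ℝ → Fin l → ℝ} (hq : ContinuousOn q (Icc a b))
    {t : ℝ} (ht : t ∈ Icc a b) : euclNorm (q t) ≤ supNorm a b q :=
  le_csSup ((isCompact_Icc.image_of_continuousOn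
    (continuous_euclNorm.comp_continuousOn hq)).bddAbove) ⟨t, ht, rfl⟩

theorem intervalIntegral.integral_le_integral_inset_add {g : ℝ → ℝ} {a b δ M : ℝ}
    (hg : ContinuousOn g (Icc a b)) (hgM : ∀ t ∈ Icc a b, g t ≤ M) (hδ : 0 ≤ δ)
    (hδab : a + δ ≤ b - δ) :
    ∫ t in a..b, g t ≤ (∫ t in a + δ..b - δ, g t) + 2 * δ * M := by
  have hint : ∀ c d, a ≤ c → c ≤ d → d ≤ b → IntervalIntegrable g volume c d :=
    fun c d hac hcd hdb => (hg.mono (Icc_subset_Icc hac hdb)).intervalIntegrable_of_Icc hcd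
  have hstrip : ∀ c, a ≤ c → c + δ ≤ b → ∫ t in c..c + δ, g t ≤ δ * M := fun c hac hcb => by
    simpa using intervalIntegral.integral_mono_on (by linarith)
      (hint c (c + δ) hac (by linarith) hcb) intervalIntegrable_const
      fun t ht => hgM t ⟨hac.trans ht.1, ht.2.trans hcb⟩
  have hleft := hstrip a le_rfl (by linarith)
  have hright := hstrip (b - δ) (by linarith) (by linarith)
  rw [sub_add_cancel] at hright
  have h₁ := hint a (a + δ) le_rfl (by linarith) (by linarith)
  have h₂ := hint (a + δ) (b - δ) (by linarith) hδab (by linarith)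
  have h₃ := hint (b - δ) b (by linarith) (by linarith) le_rfl
  rw [← intervalIntegral.integral_add_adjacent_intervals h₁ (h₂.trans h₃),
    ← intervalIntegral.integral_add_adjacent_intervals h₂ h₃]
  linarith

theorem intervalIntegral.half_mul_integral_le_of_le_on_inset {f g : ℝ → ℝ} {a b δ m M : ℝ}
    (hf : ContinuousOn f (Icc a b)) (hg : ContinuousOn g (Icc a b))
    (hf0 : ∀ t ∈ Icc a b, 0 ≤ f t) (hgM : ∀ t ∈ Icc a b, g t ≤ M) (hm : 0 ≤ m)
    (hfg : ∀ t ∈ Icc (a + δ) (b - δ), m * g t ≤ f t) (hδ : 0 ≤ δ) (hδab : a + δ ≤ b - δ)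
    (hmass : 4 * δ * M ≤ ∫ t in a..b, g t) :
    m / 2 * ∫ t in a..b, g t ≤ ∫ t in a..b, f t := by
  have hKab : Icc (a + δ) (b - δ) ⊆ Icc a b := Icc_subset_Icc (by linarith) (by linarith)
  have hhalf : (∫ t in a..b, g t) / 2 ≤ ∫ t in a + δ..b - δ, g t := by
    linarith [intervalIntegral.integral_le_integral_inset_add hg hgM hδ hδab]
  have hinner : m * ∫ t in a + δ..b - δ, g t ≤ ∫ t in a + δ..b - δ, f t := by
    rw [← intervalIntegral.integral_const_mul]
    exact intervalIntegral.integral_mono_on hδab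
      (((hg.mono hKab).intervalIntegrable_of_Icc hδab).const_mul m)
      ((hf.mono hKab).intervalIntegrable_of_Icc hδab) hfg
  have hsub : ∫ t in a + δ..b - δ, f t ≤ ∫ t in a..b, f t :=
    intervalIntegral.integral_mono_interval (by linarith) hδab (by linarith)
      (ae_restrict_of_forall_mem measurableSet_Ioc fun t ht => hf0 t (Ioc_subset_Icc_self ht))
      (hf.intervalIntegrable_of_Icc (by linarith))
  calc m / 2 * ∫ t in a..b, g t = m * ((∫ t in a..b, g t) / 2) := by ring
    _ ≤ m * ∫ t in a + δ..b - δ, g t := by gcongr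
    _ ≤ ∫ t in a..b, f t := hinner.trans hsub

theorem stmt8_general (n l : ℕ) (a b : ℝ) (hab : a < b)
    (A : ℝ → Matrix (Fin n) (Fin l) ℝ)
    (hA : ∀ i j, ContDiffOn ℝ 1 (fun t => A t i j) (Set.Icc a b))
    (B : ℝ → Matrix (Fin l) (Fin l) ℝ) (hB : ∀ t, B t = (A t)ᵀ * A t)
    (hdet : ∀ t ∈ Set.Ioo a b, (B t).det ≠ 0)
    (α γ κ : ℝ) (hα : 0 < α) :
    ∃ lam > 0, ∀ r : ℝ → Fin l → ℝ, ContinuousOn r (Set.Icc a b) →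
      intNorm a b r ≥ α * supNorm a b r →
      (∀ t, a ≤ t → t < a + γ → t ≤ b →
        euclNorm ((A t).mulVec (r t)) ≤ κ * (t - a) * supNorm a b r) →
      (∀ t, b - γ < t → t ≤ b → a ≤ t →
        euclNorm ((A t).mulVec (r t)) ≤ κ * (b - t) * supNorm a b r) →
      (∫ t in a..b, euclNorm ((A t).mulVec (r t))) ≥ lam * intNorm a b r := by
  set δ := min (α / 4) ((b - a) / 4)
  have hδ : 0 < δ := lt_min (by linarith) (by linarith)
  have hδα : 4 * δ ≤ α := by linarith [min_le_left (α / 4) ((b - a) / 4)]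
  have hδab : a + δ ≤ b - δ := by linarith [min_le_right (α / 4) ((b - a) / 4)]
  have hK : Icc (a + δ) (b - δ) ⊆ Ioo a b := Icc_subset_Ioo (by linarith) (by linarith)
  have hKab : Icc (a + δ) (b - δ) ⊆ Icc a b := hK.trans Ioo_subset_Icc_self
  have hAc : ContinuousOn A (Icc a b) :=
    continuousOn_pi.2 fun i => continuousOn_pi.2 fun j => (hA i j).continuousOn
  obtain ⟨m, hm, hAm⟩ := isCompact_Icc.exists_pos_mul_euclNorm_le (hAc.mono hKab)
    fun t ht => hB t ▸ hdet t (hK ht)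
  refine ⟨m / 2, half_pos hm, fun r hr hmass _ _ => ?_⟩
  have hM0 : 0 ≤ supNorm a b r := (euclNorm_nonneg _).trans (le_supNorm hr ⟨le_rfl, hab.le⟩)
  exact intervalIntegral.half_mul_integral_le_of_le_on_inset
    (continuous_euclNorm.comp_continuousOn
      ((continuous_fst.matrix_mulVec continuous_snd).comp_continuousOn (hAc.prodMk hr)))
    (continuous_euclNorm.comp_continuousOn hr) (fun _ _ => euclNorm_nonneg _)
    (fun _ ht => le_supNorm hr ht) hm.le (fun t ht => hAm t ht (r t)) hδ.le hδab
    ((mul_le_mul_of_nonneg_right hδα hM0).trans hmass)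

theorem stmt8 (n l : ℕ) (hln : l ≤ n) (a b : ℝ) (hab : a < b)
    (A : ℝ → Matrix (Fin n) (Fin l) ℝ)
    (hA : ∀ i j, ContDiffOn ℝ 1 (fun t => A t i j) (Set.Icc a b))
    (B : ℝ → Matrix (Fin l) (Fin l) ℝ) (hB : ∀ t, B t = (A t)ᵀ * A t)
    (hdet : ∀ t ∈ Set.Ioo a b, (B t).det ≠ 0)
    (hdeta : (B a).det = 0) (hdetb : (B b).det = 0)
    (ha hb : ℝ) (hha : 0 < ha) (hhb : 0 < hb)
    (hasyma : (fun t => (B (a + t)).det - ha ^ 2 * t ^ 2) =o[𝓝[>] (0 : ℝ)] fun t => t ^ 2)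
    (hasymb : (fun t => (B (b + t)).det - hb ^ 2 * t ^ 2) =o[𝓝[<] (0 : ℝ)] fun t => t ^ 2)
    (α γ κ : ℝ) (hα : 0 < α) (hγ : 0 < γ) (hκ : 0 < κ) :
    ∃ lam > 0, ∀ r : ℝ → Fin l → ℝ, ContinuousOn r (Set.Icc a b) →
      intNorm a b r ≥ α * supNorm a b r →
      (∀ t, a ≤ t → t < a + γ → t ≤ b →
        euclNorm ((A t).mulVec (r t)) ≤ κ * (t - a) * supNorm a b r) →
      (∀ t, b - γ < t → t ≤ b → a ≤ t →
        euclNorm ((A t).mulVec (r t)) ≤ κ * (b - t) * supNorm a b r) →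
      (∫ t in a..b, euclNorm ((A t).mulVec (r t))) ≥ lam * intNorm a b r :=
  stmt8_general n l a b hab A hA B hB hdet α γ κ hα
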